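/- Consistency of complete extensions: if E is a complete extension of a SAF that is closed under strict rules (i.e., for A₁,…,Aₙ ∈ E ∩ Arg(AT) with Conc(A₁),…,Conc(Aₙ) ⊢ φ, the argument ⟨A₁,…,Aₙ → φ⟩ is in E ∩ Arg(AT), where Arg(AT) excludes arguments A with †A ⊢ ⊥), then for any A₁,…,Aₙ ∈ E ∩ Arg(AT) the set {Conc(A₁),…,Conc(Aₙ)} is classically consistent. -/

import Mathlib

/-- Propositional formulas over countably many atoms. -/
inductive PForm where
  | atom : ℕ → PForm
  | top : PForm
  | bot : PForm
  | neg : PForm → PForm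
  | conj : PForm → PForm → PForm
  | disj : PForm → PForm → PForm
  deriving DecidableEq

/-- Classical evaluation of a formula under a valuation. -/
def PForm.eval (v : ℕ → Prop) : PForm → Prop
  | .atom n => v n
  | .top => True
  | .bot => False
  | .neg φ => ¬ φ.eval v
  | .conj φ ψ => φ.eval v ∧ ψ.eval v
  | .disj φ ψ => φ.eval v ∨ ψ.eval v

/-- Classical (semantic) consequence: `Γ ⊢ φ`. -/
def Entails (Γ : Set PForm) (φ : PForm) : Prop :=
  ∀ v : ℕ → Prop, (∀ ψ ∈ Γ, ψ.eval v) → φ.eval v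

/-- Conjunction of a list of formulas. -/
def conjList : List PForm → PForm
  | [] => .top
  | [φ] => φ
  | φ :: rest => .conj φ (conjList rest)

/-- Disjunction of a list of formulas. -/
def disjList : List PForm → PForm
  | [] => .bot
  | [φ] => φ
  | φ :: rest => .disj φ (disjList rest)

/-- A defeasible rule: antecedents and a consequent. -/
abbrev Rule := List PForm × PForm

/-- Arguments: premise arguments, strict-rule applications, defeasible-rule
applications, and rbc-arguments `⟨A₁,[A₂],…,[Aₙ] ⇝ φ⟩`, where each bracketed
hypothetical argument is stored together with its assumption ψᵢ. -/
inductive Arg where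
  | prem : PForm → Arg
  | strict : List Arg → PForm → Arg
  | defeas : List Arg → PForm → Arg
  | rbc : Arg → List (Arg × PForm) → PForm → Arg

/-- The conclusion of an argument. -/
def Conc : Arg → PForm
  | .prem φ => φ
  | .strict _ φ => φ
  | .defeas _ φ => φ
  | .rbc _ _ φ => φ

mutual
/-- The formula `†A` associated with an argument `A`. -/
def dagger : Arg → PForm
  | .prem φ => φ
  | .strict as φ => conjList (φ :: daggerList as)
  | .defeas as φ => conjList (φ :: daggerList as)
  | .rbc a bs φ => .conj φ (.conj (dagger a) (disjList (daggerPairs bs)))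
def daggerList : List Arg → List PForm
  | [] => []
  | a :: as => dagger a :: daggerList as
def daggerPairs : List (Arg × PForm) → List PForm
  | [] => []
  | b :: bs => dagger b.1 :: daggerPairs bs
end

mutual
/-- The sub-arguments of an argument. -/
def subArgs : Arg → List Arg
  | .prem φ => [.prem φ]
  | .strict as φ => .strict as φ :: subArgsList as
  | .defeas as φ => .defeas as φ :: subArgsList as
  | .rbc a bs φ => .rbc a bs φ :: subArgs a
def subArgsList : List Arg → List Arg
  | [] => []
  | a :: as => subArgs a ++ subArgsList as
end

mutual
/-- The hypothetical sub-arguments of an argument: pairs of an argument and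
the assumption it is based on. -/
def hsubArgs : Arg → List (Arg × PForm)
  | .prem _ => []
  | .strict as _ => hsubArgsList as
  | .defeas as _ => hsubArgsList as
  | .rbc a bs _ => hsubArgs a ++ bs
def hsubArgsList : List Arg → List (Arg × PForm)
  | [] => []
  | a :: as => hsubArgs a ++ hsubArgsList as
end

/-- Well-formed arguments over the defeasible rules `D` and knowledge base `F`
(with strict rules given by classical consequence). -/
inductive WF (D : Set Rule) : Set PForm → Arg → Prop
  | prem {F : Set PForm} {φ : PForm} : φ ∈ F → WF D F (.prem φ)
  | strict {F : Set PForm} {as : List Arg} {φ : PForm} :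
      (∀ a ∈ as, WF D F a) →
      Entails {ψ | ∃ a ∈ as, Conc a = ψ} φ →
      WF D F (.strict as φ)
  | defeas {F : Set PForm} {as : List Arg} {φ : PForm} :
      (∀ a ∈ as, WF D F a) →
      (as.map Conc, φ) ∈ D →
      WF D F (.defeas as φ)
  | rbc {F : Set PForm} {a : Arg} {bs : List (Arg × PForm)} {φ : PForm} :
      WF D F a →
      2 ≤ bs.length →
      Conc a = disjList (bs.map Prod.snd) →
      φ = disjList ((bs.map (fun b => Conc b.1)).dedup) →
      (∀ b ∈ bs, WF D (insert b.2 F) b.1) →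
      (∀ b ∈ bs, hsubArgs b.1 = []) →
      WF D F (.rbc a bs φ)

/-- An argument is consistent iff `†A ⊬ ⊥`. -/
def ArgConsistent (A : Arg) : Prop := ¬ Entails {dagger A} .bot

/-- `Arg(AT)`: the consistent well-formed arguments of the theory `(D,F)`. -/
def ArgAT (D : Set Rule) (F : Set PForm) : Set Arg :=
  {A | WF D F A ∧ ArgConsistent A}

/-- `Arg^φ(AT) = Arg(D, F ∪ {φ}) \ Arg(D, F)`. -/
def ArgHyp (D : Set Rule) (F : Set PForm) (φ : PForm) : Set Arg :=
  ArgAT D (insert φ F) \ ArgAT D F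

/-- `HArg(AT)`: hypothetical arguments based on an assumption used in some
rbc-argument of the theory. -/
def HArgAT (D : Set Rule) (F : Set PForm) : Set Arg :=
  {A | ∃ φ : PForm, A ∈ ArgHyp D F φ ∧
    ∃ B ∈ ArgAT D F, ∃ p ∈ hsubArgs B, p.2 = φ}

/-- `B` ends in a defeasible rule application. -/
def IsDefApp : Arg → Prop
  | .defeas _ _ => True
  | _ => False

/-- Conflicting conclusions: one is the classical negation of the other. -/
def Conflicts (A B : Arg) : Prop :=
  Conc A = .neg (Conc B) ∨ Conc B = .neg (Conc A)

/-- Direct attack in the SAF of the theory `(D,F)`. -/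
def DirectAttack (D : Set Rule) (F : Set PForm) (A B : Arg) : Prop :=
  IsDefApp B ∧ Conflicts A B ∧
    ((A ∈ ArgAT D F ∧ B ∈ ArgAT D F) ∨
     (A ∈ ArgAT D F ∧ B ∈ HArgAT D F) ∨
     (∃ φ : PForm, φ ∉ F ∧ A ∈ ArgHyp D F φ ∧ B ∈ ArgHyp D F φ))

/-- The attack relation, lifted to sub-arguments and hypothetical
sub-arguments. -/
inductive Attacks (D : Set Rule) (F : Set PForm) : Arg → Arg → Prop
  | direct {A B : Arg} : DirectAttack D F A B → Attacks D F A B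
  | sub {A B C : Arg} : C ∈ subArgs B → C ≠ B → Attacks D F A C → Attacks D F A B
  | hsub {A B C : Arg} {ψ : PForm} : (C, ψ) ∈ hsubArgs B → Attacks D F A C →
      Attacks D F A B

/-- The set of arguments of the SAF of `(D,F)`. -/
def SAFArgs (D : Set Rule) (F : Set PForm) : Set Arg :=
  ArgAT D F ∪ HArgAT D F

/-- `E` is conflict-free. -/
def ConflictFree (att : Arg → Arg → Prop) (E : Set Arg) : Prop :=
  ∀ A ∈ E, ∀ B ∈ E, ¬ att A B

/-- `E` defends `A` within the universe `U`. -/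
def Defends (U : Set Arg) (att : Arg → Arg → Prop) (E : Set Arg) (A : Arg) :
    Prop :=
  ∀ B ∈ U, att B A → ∃ C ∈ E, att C B

/-- `E` is a complete extension of the framework with universe `U`. -/
def CompleteExt (U : Set Arg) (att : Arg → Arg → Prop) (E : Set Arg) : Prop :=
  E ⊆ U ∧ ConflictFree att E ∧ ∀ A ∈ U, (A ∈ E ↔ Defends U att E A)

theorem PForm.eval_of_eval_conjList_cons {v : ℕ → Prop} {φ : PForm} :
    ∀ {l : List PForm}, (conjList (φ :: l)).eval v → φ.eval v
  | [], h => h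
  | _ :: _, h => h.1

theorem eval_conc_of_eval_dagger {v : ℕ → Prop} :
    ∀ A : Arg, (dagger A).eval v → (Conc A).eval v
  | .prem _, h => h
  | .strict _ _, h => PForm.eval_of_eval_conjList_cons h
  | .defeas _ _, h => PForm.eval_of_eval_conjList_cons h
  | .rbc _ _ _, h => h.1

theorem ArgConsistent.exists_eval_conc {A : Arg} (hA : ArgConsistent A) :
    ∃ v, (Conc A).eval v := by
  by_contra! hunsat
  exact hA fun v hv => hunsat v (eval_conc_of_eval_dagger A (hv _ rfl))

/-- Consistency: in a complete extension closed under strict rules, the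
conclusions of any finitely many arguments of `Arg(AT)` in the extension are
jointly classically consistent. -/
theorem consistency_of_complete (D : Set Rule) (F : Set PForm)
    (E : Set Arg)
    (hE : CompleteExt (SAFArgs D F) (Attacks D F) E)
    (hclosed : ∀ (L : List Arg) (φ : PForm),
      (∀ a ∈ L, a ∈ E ∩ ArgAT D F) →
      Entails {ψ | ∃ a ∈ L, Conc a = ψ} φ →
      Arg.strict L φ ∈ E ∩ ArgAT D F)
    (L : List Arg) (hL : ∀ a ∈ L, a ∈ E ∩ ArgAT D F) :
    ¬ Entails {ψ | ∃ a ∈ L, Conc a = ψ} PForm.bot := by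
  intro hbot
  obtain ⟨-, -, hcons⟩ := hclosed L .bot hL hbot
  obtain ⟨_, hfalse⟩ := hcons.exists_eval_conc
  exact hfalse
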